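/- arXiv:2409.08034 — 2 statements merged into one kernel-verified Lean document; each statement's English description precedes it below -/
import Mathlib

section
/- Let p be an odd prime, M a finite abelian p-group, and σ an automorphism of M of order 2. Then the product over i ≥ 0 of the determinants of σ acting on the F_p-vector spaces p^i M[p^{i+1}] equals (-1)^{ord_p(#M / #M^σ)}, where M^σ is the fixed subgroup of σ. -/
/-!
Since `σ² = 1` and `2` is invertible on `M`, the image of `1 - σ` is `M⁻ = {x | σ x = -x}` and its
kernel is `M^σ`, so `#M / #M^σ = #M⁻`. An involution `τ` of a finite-dimensional vector space has
`det τ = (-1) ^ dim ker (τ + 1)`: it acts as `-1` on `ker (τ + 1)` and trivially on the quotient.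
On `p^i M[p^{i+1}]` this kernel is `p^i M⁻[p^{i+1}]`, because `x ↦ (x - σ x) / 2` retracts `M` onto
`M⁻`; and `#M⁻ = ∏ᵢ #p^i M⁻[p^{i+1}]` by the filtration `M⁻[p^i]`. Hence both sides equal
`(-1) ^ Σᵢ dim p^i M⁻[p^{i+1}]`.
-/

/-- The subgroup `p^i M[p^{i+1}] = {p^i • y | y ∈ M, p^(i+1) • y = 0}` of `M`. -/
def pLayer (p i : ℕ) (M : Type*) [AddCommGroup M] : AddSubgroup M where
  carrier := {x | ∃ y : M, p ^ (i + 1) • y = 0 ∧ p ^ i • y = x}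
  zero_mem' := ⟨0, by simp, by simp⟩
  add_mem' := by
    rintro a b ⟨y, hy, rfl⟩ ⟨z, hz, rfl⟩
    exact ⟨y + z, by rw [smul_add, hy, hz, add_zero], by rw [smul_add]⟩
  neg_mem' := by
    rintro a ⟨y, hy, rfl⟩
    exact ⟨-y, by rw [smul_neg, hy, neg_zero], by rw [smul_neg]⟩

lemma pLayer_nsmul (p i : ℕ) (M : Type*) [AddCommGroup M] :
    ∀ x : pLayer p i M, p • x = 0 := by
  rintro ⟨x, y, hy, rfl⟩
  ext
  show p • p ^ i • y = 0
  rw [smul_smul, ← pow_succ', hy]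

/-- `pLayer p i M` is killed by `p`, hence an `𝔽_p`-vector space. -/
noncomputable instance pLayer.module (p i : ℕ) [NeZero p] (M : Type*) [AddCommGroup M] :
    Module (ZMod p) (pLayer p i M) :=
  AddCommGroup.zmodModule (pLayer_nsmul p i M)

lemma pLayer_map_mem (p i : ℕ) {M : Type*} [AddCommGroup M] (σ : M ≃+ M) {x : M}
    (hx : x ∈ pLayer p i M) : σ x ∈ pLayer p i M := by
  obtain ⟨y, hy, rfl⟩ := hx
  exact ⟨σ y, by rw [← map_nsmul, hy, map_zero], by rw [← map_nsmul]⟩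

/-- Restriction of an automorphism `σ` of `M` to the `𝔽_p`-vector space `p^i M[p^{i+1}]`,
as a `ZMod p`-linear endomorphism. -/
noncomputable def pLayerRes (p i : ℕ) [NeZero p] {M : Type*} [AddCommGroup M] (σ : M ≃+ M) :
    pLayer p i M →ₗ[ZMod p] pLayer p i M :=
  AddMonoidHom.toZModLinearMap p
    { toFun := fun x => ⟨σ x, pLayer_map_mem p i σ x.2⟩
      map_zero' := by ext; simp
      map_add' := by intro a b; ext; simp }

open Module in
theorem LinearMap.det_eq_neg_one_pow_finrank_ker_add_id {K V : Type*} [Field K] [AddCommGroup V]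
    [Module K V] [FiniteDimensional K V] (τ : V →ₗ[K] V) (hτ : Function.Involutive τ) :
    τ.det = (-1) ^ finrank K (ker (τ + id)) := by
  set W := ker (τ + id)
  have mem_W {v : V} : v ∈ W ↔ τ v = -v := by
    simp [W, add_eq_zero_iff_eq_neg]
  have hW : W ≤ W.comap τ := fun v hv ↦ by
    rw [Submodule.mem_comap, mem_W, hτ, mem_W.1 hv, neg_neg]
  have restrict_eq : τ.restrict hW = -id := by
    ext ⟨v, hv⟩
    exact mem_W.1 hv
  -- `τ v - v` lies in `W`, so `τ` induces the identity on `V ⧸ W`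
  have mapQ_eq : W.mapQ W τ hW = id := by
    ext v
    refine (Submodule.Quotient.eq W).2 (mem_W.2 ?_)
    rw [map_sub, hτ, neg_sub]
  rw [det_eq_det_mul_det W τ hW, restrict_eq, mapQ_eq, det_id, mul_one, ← neg_one_smul K id,
    det_smul, det_id, mul_one]

section pLayer

variable (p : ℕ) {M : Type*} [AddCommGroup M]

theorem card_ker_nsmul_pow_succ (i : ℕ) :
    Nat.card (nsmulAddMonoidHom (α := M) (p ^ (i + 1))).ker =
      Nat.card (pLayer p i M) * Nat.card (nsmulAddMonoidHom (α := M) (p ^ i)).ker := by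
  set φ := (nsmulAddMonoidHom (α := M) (p ^ i)).domRestrict (nsmulAddMonoidHom (p ^ (i + 1))).ker
  have range_φ : φ.range = pLayer p i M := by
    ext x
    exact ⟨fun ⟨y, hy⟩ ↦ ⟨y, y.2, hy⟩, fun ⟨y, hy, hyx⟩ ↦ ⟨⟨y, hy⟩, hyx⟩⟩
  have ker_le :
      (nsmulAddMonoidHom (α := M) (p ^ i)).ker ≤ (nsmulAddMonoidHom (p ^ (i + 1))).ker :=
    fun x (hx : p ^ i • x = 0) ↦ show p ^ (i + 1) • x = 0 by rw [pow_succ', mul_smul, hx, smul_zero]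
  rw [← φ.ker.card_mul_index, AddSubgroup.index_ker, range_φ, mul_comm,
    AddMonoidHom.ker_domRestrict,
    Nat.card_congr (AddSubgroup.addSubgroupOfEquivOfLe ker_le).toEquiv]

theorem card_eq_prod_card_pLayer {n : ℕ} (hexp : ∀ x : M, p ^ n • x = 0) :
    Nat.card M = ∏ i ∈ Finset.range n, Nat.card (pLayer p i M) := by
  have card_ker : ∀ j, Nat.card (nsmulAddMonoidHom (α := M) (p ^ j)).ker =
      ∏ i ∈ Finset.range j, Nat.card (pLayer p i M) := by
    intro j
    induction j with
    | zero =>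
      rw [pow_zero, Finset.prod_range_zero, ← AddSubgroup.card_bot (G := M)]
      congr
      ext x
      simp
    | succ i ih => rw [Finset.prod_range_succ, card_ker_nsmul_pow_succ, ih, mul_comm]
  rw [← card_ker, ← AddSubgroup.card_top (G := M)]
  congr
  ext x
  simpa using hexp x

end pLayer

theorem map_subtype_pLayer_eq_of_retraction (p i : ℕ) {M : Type*} [AddCommGroup M]
    {N : AddSubgroup M} (π : M →+ M) (hπ : ∀ x, π x ∈ N) (hπN : ∀ x ∈ N, π x = x) :
    (pLayer p i N).map N.subtype = pLayer p i M ⊓ N := by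
  ext x
  constructor
  · rintro ⟨_, ⟨y, hy, rfl⟩, rfl⟩
    refine ⟨⟨y, ?_, rfl⟩, (p ^ i • y).2⟩
    simpa using congrArg Subtype.val hy
  · rintro ⟨⟨y, hy, rfl⟩, hx⟩
    refine ⟨p ^ i • ⟨π y, hπ y⟩, ⟨⟨π y, hπ y⟩, ?_, rfl⟩, ?_⟩
    · ext
      simp [← map_nsmul, hy]
    · simp [← map_nsmul, hπN _ hx]

section Involution

variable {M : Type*} [AddCommGroup M] (σ : M ≃+ M)

def antifixedSubgroup : AddSubgroup M where
  carrier := {x | σ x = -x}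
  zero_mem' := by simp
  add_mem' {a b} ha hb := by simp_all [add_comm]
  neg_mem' {a} ha := by simp_all

variable {σ}

@[simp]
theorem mem_antifixedSubgroup {x : M} : x ∈ antifixedSubgroup σ ↔ σ x = -x := Iff.rfl

variable {m : ℕ}

theorem range_id_sub_eq_antifixedSubgroup (hσ : Function.Involutive σ)
    (hm : ∀ x : M, (2 * m) • x = x) :
    (AddMonoidHom.id M - σ.toAddMonoidHom).range = antifixedSubgroup σ := by
  ext x
  constructor
  · rintro ⟨y, rfl⟩
    simp [hσ y]
  · intro hx
    refine ⟨m • x, ?_⟩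
    calc m • x - σ (m • x) = (2 * m) • x := by
          rw [map_nsmul, mem_antifixedSubgroup.1 hx, smul_neg, sub_neg_eq_add, ← two_nsmul,
            smul_smul]
      _ = x := hm x

theorem card_eq_card_fixed_mul_card_antifixedSubgroup (hσ : Function.Involutive σ)
    (hm : ∀ x : M, (2 * m) • x = x) :
    Nat.card M = Nat.card {x : M // σ x = x} * Nat.card (antifixedSubgroup σ) := by
  set f := AddMonoidHom.id M - σ.toAddMonoidHom
  have card_ker : Nat.card f.ker = Nat.card {x : M // σ x = x} :=
    Nat.card_congr <| Equiv.subtypeEquivRight fun x ↦ by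
      change x - σ x = 0 ↔ _
      rw [sub_eq_zero, eq_comm]
  rw [← f.ker.card_mul_index, AddSubgroup.index_ker, card_ker,
    range_id_sub_eq_antifixedSubgroup hσ hm]

theorem card_pLayer_antifixedSubgroup (hσ : Function.Involutive σ) (hm : ∀ x : M, (2 * m) • x = x)
    (p i : ℕ) [NeZero p] :
    Nat.card (pLayer p i (antifixedSubgroup σ)) =
      Nat.card (LinearMap.ker (pLayerRes p i σ + LinearMap.id)) := by
  set π := m • (AddMonoidHom.id M - σ.toAddMonoidHom)
  have hπ (x : M) : π x ∈ antifixedSubgroup σ :=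
    (antifixedSubgroup σ).nsmul_mem
      (range_id_sub_eq_antifixedSubgroup hσ hm ▸ ⟨x, rfl⟩) m
  have hπN (x : M) (hx : x ∈ antifixedSubgroup σ) : π x = x := by
    calc π x = (2 * m) • x := by
          simp [π, mem_antifixedSubgroup.1 hx, ← two_nsmul, smul_smul, mul_comm]
      _ = x := hm x
  have ker_map : (LinearMap.ker (pLayerRes p i σ + LinearMap.id)).toAddSubgroup.map
      (pLayer p i M).subtype = pLayer p i M ⊓ antifixedSubgroup σ := by
    ext x
    simp [LinearMap.mem_ker, Subtype.ext_iff, pLayerRes, add_eq_zero_iff_eq_neg, and_comm]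
  rw [← AddSubgroup.card_map_of_injective (AddSubgroup.subtype_injective _),
    map_subtype_pLayer_eq_of_retraction p i π hπ hπN, ← ker_map,
    AddSubgroup.card_map_of_injective (AddSubgroup.subtype_injective _)]
  rfl

end Involution

theorem stmt0_general (p n : ℕ) [Fact p.Prime] (hodd : Odd p)
    (M : Type) [AddCommGroup M] [Finite M]
    (hexp : ∀ x : M, p ^ n • x = 0)
    (σ : M ≃+ M) (hσ : addOrderOf (σ : AddAut M) = 2) :
    ∏ i ∈ Finset.range n, LinearMap.det (pLayerRes p i σ) =
      (-1 : ZMod p) ^ ((Nat.card M / Nat.card {x : M // σ x = x}).factorization p) := by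
  have hinv : Function.Involutive σ := fun x ↦ by
    have h := addOrderOf_nsmul_eq_zero (σ : AddAut M)
    rw [hσ, two_nsmul] at h
    exact congrArg (· x) h
  obtain ⟨k, hk⟩ := hodd.pow (n := n)
  -- `p ^ n` is odd, so `k + 1 = (p ^ n + 1) / 2` inverts `2` on `M`
  have hm (x : M) : (2 * (k + 1)) • x = x := by
    rw [show 2 * (k + 1) = p ^ n + 1 by omega, add_nsmul, hexp, one_nsmul, zero_add]
  set d := fun i ↦ Module.finrank (ZMod p) (LinearMap.ker (pLayerRes p i σ + LinearMap.id))
  have card_antifixed : Nat.card (antifixedSubgroup σ) = p ^ ∑ i ∈ Finset.range n, d i := by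
    rw [card_eq_prod_card_pLayer p fun x ↦ Subtype.ext (hexp x), ← Finset.prod_pow_eq_pow_sum]
    refine Finset.prod_congr rfl fun i _ ↦ ?_
    rw [card_pLayer_antifixedSubgroup hinv hm, Module.natCard_eq_pow_finrank (K := ZMod p),
      Nat.card_zmod]
  have card_quotient :
      Nat.card M / Nat.card {x : M // σ x = x} = Nat.card (antifixedSubgroup σ) := by
    have : Nonempty {x : M // σ x = x} := ⟨⟨0, map_zero σ⟩⟩
    rw [card_eq_card_fixed_mul_card_antifixedSubgroup hinv hm,
      Nat.mul_div_cancel_left _ Nat.card_pos]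
  rw [card_quotient, card_antifixed, Nat.Prime.factorization_pow Fact.out, Finsupp.single_eq_same,
    ← Finset.prod_pow_eq_pow_sum]
  exact Finset.prod_congr rfl fun i _ ↦
    LinearMap.det_eq_neg_one_pow_finrank_ker_add_id _ fun v ↦ Subtype.ext (hinv v)

/-- for `p` an odd prime, `M` a finite abelian `p`-group of exponent dividing
`p^n`, and `σ` an automorphism of `M` of order 2, the product over `0 ≤ i < n` of the
determinants of `σ` on the `𝔽_p`-vector spaces `p^i M[p^{i+1}]` equals
`(-1) ^ ord_p(#M / #M^σ)`. -/
theorem stmt0 (p n : ℕ) [Fact p.Prime] (hodd : Odd p)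
    (M : Type) [AddCommGroup M] [Finite M]
    (hpgroup : ∃ k : ℕ, Nat.card M = p ^ k)
    (hexp : ∀ x : M, p ^ n • x = 0)
    (σ : M ≃+ M) (hσ : addOrderOf (σ : AddAut M) = 2) :
    ∏ i ∈ Finset.range n, LinearMap.det (pLayerRes p i σ) =
      (-1 : ZMod p) ^ ((Nat.card M / Nat.card {x : M // σ x = x}).factorization p) :=
  stmt0_general p n hodd M hexp σ hσ
end

section
/- Let φ : X₁ → X₂ and φ' : X₂ → X₃ be homomorphisms of abelian groups, each with finite kernel and finite cokernel. Then φ' ∘ φ has finite kernel and cokernel, and z(φ' ∘ φ) = z(φ') · z(φ), where z(ψ) = #coker(ψ)/#ker(ψ) ∈ Q. -/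
/-!
Put `R = range φ` and `K = ker φ'`. Restricting `φ` to `ker(φ' ∘ φ) = φ⁻¹(K)` and `φ'` to
`φ'⁻¹(range(φ' ∘ φ)) = R ⊔ K` gives
`#ker(φ' ∘ φ) = #(R ⊓ K) · #ker φ` and `#coker(φ' ∘ φ) = [X₂ : R ⊔ K] · #coker φ'`,
while inside `X₂` we have `#K = [K : R ⊓ K] · #(R ⊓ K)` and `#coker φ = [K : R ⊓ K] · [X₂ : R ⊔ K]`.
In `z(φ') · z(φ)` the factors `[K : R ⊓ K]`, `#(R ⊓ K)` and `[X₂ : R ⊔ K]` cancel to `z(φ' ∘ φ)`.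
-/

namespace AddSubgroup

variable {G : Type*} [AddGroup G]

theorem card_eq_relIndex_mul_card_inf (H K : AddSubgroup G) :
    Nat.card K = H.relIndex K * Nat.card ↥(H ⊓ K) := by
  have h := relIndex_inf_mul_relIndex (⊥ : AddSubgroup G) H K
  rw [bot_inf_eq, relIndex_bot_left, relIndex_bot_left] at h
  rw [← h, mul_comm]

theorem index_eq_relIndex_mul_index_sup (H K : AddSubgroup G) [H.Normal] :
    H.index = H.relIndex K * (H ⊔ K).index := by
  rw [← relIndex_sup_left, relIndex_mul_index le_sup_left]

end AddSubgroup

namespace AddMonoidHom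

variable {G G' G'' : Type*} [AddGroup G] [AddGroup G'] [AddGroup G'']
  (f : G →+ G') (g : G' →+ G'')

theorem card_ker_comp :
    Nat.card (g.comp f).ker = Nat.card ↥(f.range ⊓ g.ker) * Nat.card f.ker := by
  rw [← comap_ker, AddSubgroup.card_eq_relIndex_mul_card_inf f.ker, AddSubgroup.relIndex_ker,
    inf_of_le_left (ker_le_comap f g.ker), AddSubgroup.map_comap_eq]

theorem index_range_comp :
    (g.comp f).range.index = (f.range ⊔ g.ker).index * g.range.index := by
  have hle : (g.comp f).range ≤ g.range := by
    rw [range_comp]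
    exact AddSubgroup.map_le_range g _
  rw [← AddSubgroup.relIndex_mul_index hle, ← AddSubgroup.index_comap, range_comp,
    AddSubgroup.comap_map_eq]

end AddMonoidHom

/-- if `φ : X₁ → X₂` and `φ' : X₂ → X₃` are homomorphisms of abelian groups
with finite kernel and cokernel, then so is `φ' ∘ φ`, and
`z(φ' ∘ φ) = z(φ') · z(φ)`, where `z(ψ) = #coker(ψ)/#ker(ψ) ∈ ℚ`. -/
theorem stmt16 (X₁ X₂ X₃ : Type)
    [AddCommGroup X₁] [AddCommGroup X₂] [AddCommGroup X₃]
    (φ : X₁ →+ X₂) (φ' : X₂ →+ X₃)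
    (h1k : Finite φ.ker) (h1c : Finite (X₂ ⧸ φ.range))
    (h2k : Finite φ'.ker) (h2c : Finite (X₃ ⧸ φ'.range)) :
    Finite (φ'.comp φ).ker ∧ Finite (X₃ ⧸ (φ'.comp φ).range) ∧
      (Nat.card (X₃ ⧸ (φ'.comp φ).range) : ℚ) / (Nat.card (φ'.comp φ).ker : ℚ) =
        ((Nat.card (X₃ ⧸ φ'.range) : ℚ) / (Nat.card φ'.ker : ℚ)) *
          ((Nat.card (X₂ ⧸ φ.range) : ℚ) / (Nat.card φ.ker : ℚ)) := by
  have hker := φ.card_ker_comp φ'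
  have hcoker := φ.index_range_comp φ'
  have hker' := φ.range.card_eq_relIndex_mul_card_inf φ'.ker
  have hcoker' := φ.range.index_eq_relIndex_mul_index_sup φ'.ker
  have : Finite ↥(φ.range ⊓ φ'.ker) :=
    Finite.of_injective _ (AddSubgroup.inclusion_injective inf_le_right)
  have hk₁ : Nat.card φ.ker ≠ 0 := Nat.card_pos.ne'
  have hm : Nat.card ↥(φ.range ⊓ φ'.ker) ≠ 0 := Nat.card_pos.ne'
  have hc₁ : φ.range.index ≠ 0 := AddSubgroup.index_ne_zero_of_finite
  have hc₂ : φ'.range.index ≠ 0 := AddSubgroup.index_ne_zero_of_finite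
  have hr : φ.range.relIndex φ'.ker ≠ 0 := left_ne_zero_of_mul (hcoker' ▸ hc₁)
  have hq : (φ.range ⊔ φ'.ker).index ≠ 0 := right_ne_zero_of_mul (hcoker' ▸ hc₁)
  refine ⟨Nat.finite_of_card_ne_zero (hker ▸ mul_ne_zero hm hk₁),
    Nat.finite_of_card_ne_zero
      (show (φ'.comp φ).range.index ≠ 0 from hcoker ▸ mul_ne_zero hq hc₂), ?_⟩
  change ((φ'.comp φ).range.index : ℚ) / _ = (φ'.range.index / _) * (φ.range.index / _)
  rw [hker, hcoker, hker', hcoker']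
  push_cast
  field_simp
end
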